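/- arXiv:2603.27081 — 2 statements merged into one kernel-verified Lean document; each statement's English description precedes it below -/
import Mathlib

section
/- Let n ≥ 2 and let h : ℝ^n → ℝ be twice continuously differentiable on an open set U ⊆ ℝ^n containing Δ_n°, with Hessian ∇²h(x) positive definite for every x ∈ Δ_n°. Then the set M := {P_H ∇h(x) : x ∈ Δ_n°} is a nonempty, open (in the subspace topology of H), and connected subset of the hyperplane H. -/
/-!
Extend `x ↦ P_H ∇h(x)` off the affine hull of the simplex by
`F y = P_H ∇h(y) + (∑ y - 1) 𝟙`. Its derivative `v ↦ P_H ∇²h(y) v + (∑ v) 𝟙` is injective wherever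
the Hessian is positive definite: the two summands lie in the complementary subspaces `H` and
`ℝ𝟙`, so both vanish; then `∇²h v ∈ ℝ𝟙` and `v ⊥ 𝟙`, whence `v ⬝ ∇²h v = 0`. By the inverse function theorem `F` is
open near the open simplex, and since `∑ F y = n (∑ y - 1)`, the set `M` is the trace on `H` of an
open set. Connectedness holds because `M` is a continuous image of the convex set `Δ_n°`.
-/

open Matrix MeasureTheory

noncomputable section

/-- The standard probability simplex in `ℝ^n`. -/
def simplex (n : ℕ) : Set (Fin n → ℝ) := {x | (∀ i, 0 ≤ x i) ∧ ∑ i, x i = 1}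

/-- The relative interior of the standard probability simplex. -/
def simplexInt (n : ℕ) : Set (Fin n → ℝ) := {x | (∀ i, 0 < x i) ∧ ∑ i, x i = 1}

/-- The all-ones vector `𝟙`. -/
def ones (n : ℕ) : Fin n → ℝ := fun _ => 1

/-- The orthogonal projection matrix `P_H = I - (1/n) 𝟙 𝟙ᵀ` onto `H = {z : ∑ i, z i = 0}`. -/
def PH (n : ℕ) : Matrix (Fin n) (Fin n) ℝ :=
  1 - (n : ℝ)⁻¹ • Matrix.of fun _ _ => (1 : ℝ)

/-- The gradient (vector of partial derivatives) of `h`. -/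
def grad {n : ℕ} (h : (Fin n → ℝ) → ℝ) (x : Fin n → ℝ) : Fin n → ℝ :=
  fun i => fderiv ℝ h x (Pi.single i 1)

/-- The Hessian matrix of `h`. -/
def hess {n : ℕ} (h : (Fin n → ℝ) → ℝ) (x : Fin n → ℝ) : Matrix (Fin n) (Fin n) ℝ :=
  Matrix.of fun i j =>
    fderiv ℝ (fun y => fderiv ℝ h y (Pi.single j 1)) x (Pi.single i 1)

open Filter Topology Function

theorem HasStrictFDerivAt.map_nhds_eq_of_injective {𝕜 E : Type*} [NontriviallyNormedField 𝕜]
    [CompleteSpace 𝕜] [NormedAddCommGroup E] [NormedSpace 𝕜 E] [FiniteDimensional 𝕜 E]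
    {f : E → E} {f' : E →L[𝕜] E} {x : E} (hf : HasStrictFDerivAt f f' x) (hinj : Injective f') :
    map f (𝓝 x) = 𝓝 (f x) :=
  haveI := FiniteDimensional.complete 𝕜 E
  HasStrictFDerivAt.map_nhds_eq_of_equiv
    (f' := (LinearEquiv.ofInjectiveEndo (f' : E →ₗ[𝕜] E) hinj).toContinuousLinearEquiv) hf

section Projection

variable {n : ℕ}

theorem PH_mulVec_apply (y : Fin n → ℝ) (i : Fin n) :
    (PH n *ᵥ y) i = y i - (n : ℝ)⁻¹ * ∑ j, y j := by
  simp only [PH, sub_mulVec, smul_mulVec, one_mulVec, Pi.sub_apply, Pi.smul_apply, smul_eq_mul]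
  congr 1
  simp [Matrix.mulVec, dotProduct]

theorem sum_PH_mulVec (hn : n ≠ 0) (y : Fin n → ℝ) : ∑ i, (PH n *ᵥ y) i = 0 := by
  simp only [PH_mulVec_apply, Finset.sum_sub_distrib, Finset.sum_const, Finset.card_univ,
    Fintype.card_fin, nsmul_eq_mul]
  field_simp
  ring

theorem dotProduct_eq_zero_of_PH_mulVec_eq_zero {v w : Fin n → ℝ} (hv : ∑ i, v i = 0)
    (hw : PH n *ᵥ w = 0) : v ⬝ᵥ w = 0 := by
  have hconst : ∀ i, w i = (n : ℝ)⁻¹ * ∑ j, w j := fun i => by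
    simpa [PH_mulVec_apply, sub_eq_zero] using congrFun hw i
  calc v ⬝ᵥ w = ∑ i, v i * ((n : ℝ)⁻¹ * ∑ j, w j) :=
        Finset.sum_congr rfl fun i _ => by rw [← hconst i]
    _ = 0 := by rw [← Finset.sum_mul, hv, zero_mul]

theorem eq_zero_of_PH_mulVec_transpose_add_sum_smul_ones_eq_zero (hn : n ≠ 0)
    {A : Matrix (Fin n) (Fin n) ℝ} (hA : ∀ v : Fin n → ℝ, v ≠ 0 → 0 < v ⬝ᵥ (A *ᵥ v))
    {v : Fin n → ℝ} (hv : PH n *ᵥ (Aᵀ *ᵥ v) + (∑ i, v i) • ones n = 0) : v = 0 := by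
  have hsum : ∑ i, v i = 0 := by
    have := congrArg (fun w => ∑ i, w i) hv
    simp only [Pi.add_apply, Finset.sum_add_distrib, sum_PH_mulVec hn, Pi.smul_apply, ones,
      smul_eq_mul, mul_one, Finset.sum_const, Finset.card_univ, Fintype.card_fin, nsmul_eq_mul,
      Pi.zero_apply, zero_add, mul_zero] at this
    exact (mul_eq_zero.mp this).resolve_left (Nat.cast_ne_zero.mpr hn)
  rw [hsum, zero_smul, add_zero] at hv
  by_contra hv0
  have hquad : v ⬝ᵥ (Aᵀ *ᵥ v) = v ⬝ᵥ (A *ᵥ v) := by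
    rw [dotProduct_mulVec, vecMul_transpose, dotProduct_comm]
  exact (hA v hv0).ne' (hquad ▸ dotProduct_eq_zero_of_PH_mulVec_eq_zero hsum hv)

end Projection

section Simplex

variable {n : ℕ}

theorem convex_simplexInt (n : ℕ) : Convex ℝ (simplexInt n) := by
  have : simplexInt n = Set.univ.pi (fun _ => Set.Ioi 0) ∩ {x | ∑ i, x i = 1} := by
    ext x; simp [simplexInt]
  rw [this]
  refine (convex_pi fun _ _ => convex_Ioi 0).inter ?_
  simpa using
    convex_hyperplane (∑ i, LinearMap.proj (R := ℝ) (φ := fun _ : Fin n => ℝ) i).isLinear 1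

theorem simplexInt_nonempty (hn : n ≠ 0) : (simplexInt n).Nonempty :=
  ⟨fun _ => (n : ℝ)⁻¹, fun _ => by positivity, by simp [hn]⟩

theorem isConnected_simplexInt (hn : n ≠ 0) : IsConnected (simplexInt n) :=
  ⟨simplexInt_nonempty hn, (convex_simplexInt n).isPreconnected⟩

end Simplex

section Gradient

variable {n : ℕ} {h : (Fin n → ℝ) → ℝ} {x : Fin n → ℝ}

theorem hasStrictFDerivAt_grad (hx : ContDiffAt ℝ 2 h x) :
    HasStrictFDerivAt (grad h) (toLin' (hess h x)ᵀ).toContinuousLinearMap x := by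
  refine hasStrictFDerivAt_pi'' fun i => ?_
  have hpartial : ContDiffAt ℝ 1 (fun y => fderiv ℝ h y (Pi.single i 1)) x :=
    (hx.fderiv_right (m := 1) (by norm_num)).clm_apply contDiffAt_const
  refine (hpartial.hasStrictFDerivAt one_ne_zero).congr_fderiv <|
    ContinuousLinearMap.ext fun v => ?_
  conv_lhs => rw [pi_eq_sum_univ' v]
  simp [hess, Matrix.mulVec, dotProduct, mul_comm]

end Gradient

def projGradExt {n : ℕ} (h : (Fin n → ℝ) → ℝ) (y : Fin n → ℝ) : Fin n → ℝ :=
  PH n *ᵥ grad h y + (∑ i, y i - 1) • ones n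

section Extension

variable {n : ℕ} {h : (Fin n → ℝ) → ℝ}

theorem projGradExt_of_sum_eq_one {y : Fin n → ℝ} (hy : ∑ i, y i = 1) :
    projGradExt h y = PH n *ᵥ grad h y := by
  simp [projGradExt, hy]

theorem sum_projGradExt (hn : n ≠ 0) (y : Fin n → ℝ) :
    ∑ i, projGradExt h y i = n * (∑ i, y i - 1) := by
  simp [projGradExt, Finset.sum_add_distrib, sum_PH_mulVec hn, ones]
  ring

theorem hasStrictFDerivAt_projGradExt {x : Fin n → ℝ} (hx : ContDiffAt ℝ 2 h x) :
    HasStrictFDerivAt (projGradExt h)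
      ((toLin' (PH n)).toContinuousLinearMap ∘L (toLin' (hess h x)ᵀ).toContinuousLinearMap +
        (∑ i, ContinuousLinearMap.proj i).smulRight (ones n)) x := by
  refine ((toLin' (PH n)).toContinuousLinearMap.hasStrictFDerivAt.comp x
    (hasStrictFDerivAt_grad hx)).add (HasStrictFDerivAt.smul_const ?_ _)
  simpa using ((∑ i, ContinuousLinearMap.proj (R := ℝ) (φ := fun _ : Fin n => ℝ) i)
    |>.hasStrictFDerivAt.sub_const 1)

theorem map_projGradExt_nhds (hn : n ≠ 0) {x : Fin n → ℝ} (hx : ContDiffAt ℝ 2 h x)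
    (hpos : ∀ v : Fin n → ℝ, v ≠ 0 → 0 < v ⬝ᵥ (hess h x *ᵥ v)) :
    map (projGradExt h) (𝓝 x) = 𝓝 (projGradExt h x) := by
  refine (hasStrictFDerivAt_projGradExt hx).map_nhds_eq_of_injective ?_
  refine (injective_iff_map_eq_zero _).2 fun v hv => ?_
  refine eq_zero_of_PH_mulVec_transpose_add_sum_smul_ones_eq_zero hn hpos ?_
  simpa using hv

theorem image_simplexInt_eq_interior_inter (hn : n ≠ 0)
    (hC2 : ∀ x ∈ simplexInt n, ContDiffAt ℝ 2 h x)
    (hpos : ∀ x ∈ simplexInt n, ∀ v : Fin n → ℝ, v ≠ 0 → 0 < v ⬝ᵥ (hess h x *ᵥ v)) :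
    (fun x => PH n *ᵥ grad h x) '' simplexInt n =
      interior (projGradExt h '' {y | ∀ i, 0 < y i}) ∩ {z | ∑ i, z i = 0} := by
  ext z
  constructor
  · rintro ⟨x, hx, rfl⟩
    refine ⟨?_, sum_PH_mulVec hn _⟩
    have hpositive : IsOpen {y : Fin n → ℝ | ∀ i, 0 < y i} := by
      simpa only [Set.ofPred_forall] using
        isOpen_iInter_of_finite fun i => isOpen_lt continuous_const (continuous_apply i)
    dsimp only
    rw [mem_interior_iff_mem_nhds, ← projGradExt_of_sum_eq_one hx.2,
      ← map_projGradExt_nhds hn (hC2 x hx) (hpos x hx)]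
    exact image_mem_map (hpositive.mem_nhds hx.1)
  · rintro ⟨hz, hzH⟩
    obtain ⟨y, hy, rfl⟩ := interior_subset hz
    have hy1 : ∑ i, y i = 1 := by
      have hzH : n * (∑ i, y i - 1) = 0 := sum_projGradExt hn y ▸ hzH
      exact sub_eq_zero.1 ((mul_eq_zero.1 hzH).resolve_left (Nat.cast_ne_zero.2 hn))
    exact ⟨y, ⟨hy, hy1⟩, (projGradExt_of_sum_eq_one hy1).symm⟩

end Extension

/-- Under the C² and positive-definite-Hessian hypotheses, the set
`M = {P_H ∇h(x) : x ∈ Δ_n°}` is a nonempty subset of the hyperplane `H`, open in the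
subspace topology of `H`, and connected. -/
theorem stmt3 {n : ℕ} (hn : 2 ≤ n) (h : (Fin n → ℝ) → ℝ)
    (U : Set (Fin n → ℝ)) (hU : IsOpen U) (hUsub : simplexInt n ⊆ U)
    (hC2 : ContDiffOn ℝ 2 h U)
    (hpos : ∀ x ∈ simplexInt n, ∀ v : Fin n → ℝ, v ≠ 0 → 0 < v ⬝ᵥ (hess h x *ᵥ v)) :
    ((fun x => PH n *ᵥ grad h x) '' simplexInt n).Nonempty ∧
    (∀ z ∈ (fun x => PH n *ᵥ grad h x) '' simplexInt n, ∑ i, z i = 0) ∧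
    IsOpen (Subtype.val ⁻¹' ((fun x => PH n *ᵥ grad h x) '' simplexInt n) :
      Set {z : Fin n → ℝ | ∑ i, z i = 0}) ∧
    IsConnected ((fun x => PH n *ᵥ grad h x) '' simplexInt n) := by
  have hn0 : n ≠ 0 := by omega
  have hC2x : ∀ x ∈ simplexInt n, ContDiffAt ℝ 2 h x :=
    fun x hx => hC2.contDiffAt (hU.mem_nhds (hUsub hx))
  have hcont : ContinuousOn (fun x => PH n *ᵥ grad h x) (simplexInt n) := fun x hx =>
    ((continuous_const.matrix_mulVec continuous_id).continuousAt.comp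
      (hasStrictFDerivAt_grad (hC2x x hx)).continuousAt).continuousWithinAt
  refine ⟨(simplexInt_nonempty hn0).image _, ?_, ?_, (isConnected_simplexInt hn0).image _ hcont⟩
  · rintro _ ⟨x, -, rfl⟩
    exact sum_PH_mulVec hn0 _
  · rw [image_simplexInt_eq_interior_inter hn0 hC2x hpos]
    exact isOpen_induced_iff.2 ⟨_, isOpen_interior, (Subtype.preimage_coe_inter_self _ _).symm⟩
end
end

section
/- Let n ≥ 2 and let h : ℝ^n → ℝ be continuous and convex on Δ_n, C^∞ on an open set U ⊆ ℝ^n containing Δ_n°, with Hessian ∇²h(x) positive definite for every x ∈ Δ_n°. Define W := {∇h(x) + c·𝟙 : x ∈ Δ_n°, c ∈ ℝ}. Then W is an open subset of ℝ^n, and there exists a C^∞ map q : W → ℝ^n such that for every y ∈ W, q(y) lies in Δ_n° and is the unique maximizer of x ↦ ⟨x, y⟩ − h(x) over Δ_n. -/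
open Matrix MeasureTheory

noncomputable section

/-!
Translating `y` along `𝟙` does not change the maximizers over `Δ_n`, and by convexity and
Fermat's rule along the hyperplane `{∑ i, x i = 1}`, a point `x ∈ Δ_n°` maximizes
`⟨x, y⟩ - h x` exactly when `y ∈ ∇h x + ℝ𝟙`. A positive definite Hessian makes `∇h` strictly
monotone, hence injective modulo `𝟙` on `Δ_n°`; since the maximizers form a convex set, the
midpoint of two of them is again a maximizer in `Δ_n°`, which gives uniqueness.

For smoothness let `P` be the projection onto that hyperplane along `𝟙` and
`Φ z = ∇h (P z) + (z - P z)`. Then `Φ (x + c𝟙) = ∇h x + c𝟙`, so `W = Φ (P⁻¹ Δ_n°)`, and on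
`P⁻¹ Δ_n°` the map `Φ` is injective with invertible derivative `∇²h ∘ P + (I - P)`. By the
inverse function theorem `W` is open and `Φ⁻¹` is smooth on it; `q = P ∘ Φ⁻¹`.
-/

open Filter Topology Function

theorem ConvexOn.le_sub_of_hasFDerivAt {E : Type*} [NormedAddCommGroup E] [NormedSpace ℝ E]
    {s : Set E} {f : E → ℝ} {f' : E →L[ℝ] ℝ} {x y : E} (hf : ConvexOn ℝ s f) (hx : x ∈ s)
    (hy : y ∈ s) (hf' : HasFDerivAt f f' x) : f' (y - x) ≤ f y - f x := by
  set γ : ℝ →ᵃ[ℝ] E := AffineMap.lineMap x y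
  have hline : ConvexOn ℝ (γ ⁻¹' s) (f ∘ γ) := hf.comp_affineMap γ
  have hderiv : HasDerivAt (f ∘ γ) (f' (y - x)) 0 := by
    refine HasFDerivAt.comp_hasDerivAt (0 : ℝ) ?_ AffineMap.hasDerivAt_lineMap
    simpa [γ] using hf'
  simpa [γ, slope_def_field] using hline.le_slope_of_hasDerivAt (x := 0) (y := 1)
    (by simpa [γ] using hx) (by simpa [γ] using hy) one_pos hderiv

section InverseFunction

variable {𝕂 E F : Type*} [RCLike 𝕂] [NormedAddCommGroup E] [NormedSpace 𝕂 E] [CompleteSpace E]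
  [NormedAddCommGroup F] [NormedSpace 𝕂 F] {f : E → F} {s : Set E} {k : WithTop ℕ∞}

theorem isOpen_image_of_contDiffAt_of_hasFDerivAt_equiv (hs : IsOpen s)
    (hf : ∀ x ∈ s, ContDiffAt 𝕂 k f x)
    (hf' : ∀ x ∈ s, ∃ f' : E ≃L[𝕂] F, HasFDerivAt f (f' : E →L[𝕂] F) x) (hk : k ≠ 0) :
    IsOpen (f '' s) := by
  refine isOpen_iff_mem_nhds.2 ?_
  rintro _ ⟨x, hx, rfl⟩
  obtain ⟨f', hf'x⟩ := hf' x hx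
  rw [← ((hf x hx).hasStrictFDerivAt' hf'x hk).map_nhds_eq_of_equiv]
  exact image_mem_map (hs.mem_nhds hx)

theorem contDiffOn_invFunOn_image (hs : IsOpen s) (hinj : Set.InjOn f s)
    (hf : ∀ x ∈ s, ContDiffAt 𝕂 k f x)
    (hf' : ∀ x ∈ s, ∃ f' : E ≃L[𝕂] F, HasFDerivAt f (f' : E →L[𝕂] F) x) (hk : k ≠ 0) :
    ContDiffOn 𝕂 k (invFunOn f s) (f '' s) := by
  rintro _ ⟨x, hx, rfl⟩
  obtain ⟨f', hf'x⟩ := hf' x hx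
  have hstrict := (hf x hx).hasStrictFDerivAt' hf'x hk
  refine ((hf x hx).to_localInverse hf'x hk).congr_of_eventuallyEq ?_ |>.contDiffWithinAt
  filter_upwards [hstrict.eventually_right_inverse, hstrict.localInverse_tendsto (hs.mem_nhds hx)]
    with y hy hys
  exact (congrArg (invFunOn f s) hy).symm.trans (hinj.leftInvOn_invFunOn hys)

end InverseFunction

theorem ContinuousLinearMap.apply_eq_sum_mul_single {ι : Type*} [Fintype ι] [DecidableEq ι]
    (ℓ : (ι → ℝ) →L[ℝ] ℝ) (v : ι → ℝ) : ℓ v = ∑ i, v i * ℓ (Pi.single i 1) := by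
  conv_lhs => rw [← Finset.univ_sum_single v, map_sum]
  refine Finset.sum_congr rfl fun i _ => ?_
  rw [← smul_eq_mul, ← map_smul, ← Pi.single_smul', smul_eq_mul, mul_one]

theorem HasDerivAt.const_dotProduct {ι : Type*} [Fintype ι] {g : ℝ → ι → ℝ} {g' : ι → ℝ} {t : ℝ}
    (hg : HasDerivAt g g' t) (v : ι → ℝ) : HasDerivAt (fun t => v ⬝ᵥ g t) (v ⬝ᵥ g') t := by
  simpa [dotProduct] using HasDerivAt.fun_sum fun i _ => (hasDerivAt_pi.1 hg i).const_mul (v i)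

section Gradient

variable {n : ℕ} {h : (Fin n → ℝ) → ℝ} {x : Fin n → ℝ}

theorem fderiv_apply_eq_grad_dotProduct (h : (Fin n → ℝ) → ℝ) (x v : Fin n → ℝ) :
    fderiv ℝ h x v = grad h x ⬝ᵥ v := by
  simp [(fderiv ℝ h x).apply_eq_sum_mul_single v, dotProduct, grad, mul_comm]

def evalSingleCLM (n : ℕ) : ((Fin n → ℝ) →L[ℝ] ℝ) →L[ℝ] (Fin n → ℝ) :=
  ContinuousLinearMap.pi fun j => ContinuousLinearMap.apply ℝ ℝ (Pi.single j 1)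

def hessCLM (h : (Fin n → ℝ) → ℝ) (x : Fin n → ℝ) : (Fin n → ℝ) →L[ℝ] (Fin n → ℝ) :=
  LinearMap.toContinuousLinearMap (hess h x).vecMulLinear

@[simp] theorem hessCLM_apply (v : Fin n → ℝ) : hessCLM h x v = v ᵥ* hess h x := rfl

theorem hasFDerivAt_grad (hh : ContDiffAt ℝ 2 h x) : HasFDerivAt (grad h) (hessCLM h x) x := by
  set B := fderiv ℝ (fderiv ℝ h) x
  have hB : HasFDerivAt (fderiv ℝ h) B x :=
    ((hh.fderiv_right le_rfl).differentiableAt one_ne_zero).hasFDerivAt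
  have hentry (i j : Fin n) : hess h x i j = B (Pi.single i 1) (Pi.single j 1) := by
    simp [hess, (hB.clm_apply (hasFDerivAt_const (Pi.single j (1 : ℝ)) x)).fderiv]
  have hcomp : HasFDerivAt (grad h) ((evalSingleCLM n).comp B) x :=
    (evalSingleCLM n).hasFDerivAt.comp x hB
  refine hcomp.congr_fderiv (ContinuousLinearMap.ext fun v => funext fun j => ?_)
  simpa [evalSingleCLM, vecMul, dotProduct, hentry] using
    (B.flip (Pi.single j 1)).apply_eq_sum_mul_single v

theorem ContDiffAt.grad {k m : WithTop ℕ∞} (hh : ContDiffAt ℝ k h x) (hmk : m + 1 ≤ k) :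
    ContDiffAt ℝ m (grad h) x :=
  (evalSingleCLM n).contDiff.contDiffAt.comp x (hh.fderiv_right hmk)

theorem grad_sub_dotProduct_sub_pos {S : Set (Fin n → ℝ)} (hS : Convex ℝ S)
    (hh : ∀ x ∈ S, ContDiffAt ℝ 2 h x)
    (hpos : ∀ x ∈ S, ∀ v : Fin n → ℝ, v ≠ 0 → 0 < v ⬝ᵥ (hess h x *ᵥ v))
    {x x' : Fin n → ℝ} (hx : x ∈ S) (hx' : x' ∈ S) (hne : x ≠ x') :
    0 < (grad h x - grad h x') ⬝ᵥ (x - x') := by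
  set v := x - x'
  set γ : ℝ →ᵃ[ℝ] (Fin n → ℝ) := AffineMap.lineMap x' x
  have hγS : ∀ t ∈ Set.Icc (0 : ℝ) 1, γ t ∈ S := fun t ht => hS.lineMap_mem hx' hx ht
  have hderiv : ∀ t ∈ Set.Icc (0 : ℝ) 1,
      HasDerivAt (fun t => v ⬝ᵥ grad h (γ t)) (v ⬝ᵥ (hess h (γ t) *ᵥ v)) t := by
    intro t ht
    have hgrad := (hasFDerivAt_grad (hh _ (hγS t ht))).comp_hasDerivAt t
      (AffineMap.hasDerivAt_lineMap (a := x') (b := x) (x := t))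
    refine (hgrad.const_dotProduct v).congr_deriv ?_
    rw [hessCLM_apply, dotProduct_mulVec]
    exact dotProduct_comm _ _
  have hmono : StrictMonoOn (fun t => v ⬝ᵥ grad h (γ t)) (Set.Icc 0 1) :=
    strictMonoOn_of_hasDerivWithinAt_pos (convex_Icc 0 1)
      (fun t ht => (hderiv t ht).continuousAt.continuousWithinAt)
      (fun t ht => (hderiv t (interior_subset ht)).hasDerivWithinAt)
      (fun t ht => hpos _ (hγS t (interior_subset ht)) v (sub_ne_zero.2 hne))
  have := hmono (Set.left_mem_Icc.2 zero_le_one) (Set.right_mem_Icc.2 zero_le_one) zero_lt_one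
  simp only [γ, AffineMap.lineMap_apply_zero, AffineMap.lineMap_apply_one] at this
  rw [sub_dotProduct, dotProduct_comm (grad h x), dotProduct_comm (grad h x')]
  linarith

end Gradient

section Simplex

variable {n : ℕ}

theorem simplexInt_subset_simplex (n : ℕ) : simplexInt n ⊆ simplex n :=
  fun _ hx => ⟨fun i => (hx.1 i).le, hx.2⟩

theorem convex_simplex (n : ℕ) : Convex ℝ (simplex n) := convex_stdSimplex ℝ (Fin n)

theorem ne_zero_of_mem_simplexInt {x : Fin n → ℝ} (hx : x ∈ simplexInt n) : n ≠ 0 := by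
  rintro rfl
  simpa using hx.2

theorem dotProduct_ones (v : Fin n → ℝ) : v ⬝ᵥ ones n = ∑ i, v i := by
  simp [dotProduct, ones]

theorem smul_ones_dotProduct_eq_zero {v : Fin n → ℝ} (hv : ∑ i, v i = 0) (c : ℝ) :
    (c • ones n) ⬝ᵥ v = 0 := by
  rw [smul_dotProduct, dotProduct_comm, dotProduct_ones, hv, smul_zero]

theorem sum_sub_eq_zero_of_sum_eq_one {x x' : Fin n → ℝ} (hx : ∑ i, x i = 1)
    (hx' : ∑ i, x' i = 1) : ∑ i, (x - x') i = 0 := by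
  simp [Finset.sum_sub_distrib, hx, hx']

theorem eventually_add_smul_mem_simplex {m v : Fin n → ℝ} (hm : m ∈ simplexInt n)
    (hv : ∑ i, v i = 0) : ∀ᶠ t in 𝓝 (0 : ℝ), m + t • v ∈ simplex n := by
  have hpos (i : Fin n) : ∀ᶠ t in 𝓝 (0 : ℝ), 0 < m i + t * v i := by
    have : Continuous fun t : ℝ => m i + t * v i := by fun_prop
    exact continuousAt_const.eventually_lt this.continuousAt (by simpa using hm.1 i)
  filter_upwards [eventually_all.2 hpos] with t ht
  refine ⟨fun i => (ht i).le, ?_⟩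
  simp [Finset.sum_add_distrib, ← Finset.mul_sum, hv, hm.2]

end Simplex

section Maximizer

variable {n : ℕ} {h : (Fin n → ℝ) → ℝ}

theorem eq_of_grad_eq_add_smul_ones (hh : ∀ x ∈ simplexInt n, ContDiffAt ℝ 2 h x)
    (hpos : ∀ x ∈ simplexInt n, ∀ v : Fin n → ℝ, v ≠ 0 → 0 < v ⬝ᵥ (hess h x *ᵥ v))
    {x x' : Fin n → ℝ} (hx : x ∈ simplexInt n) (hx' : x' ∈ simplexInt n) {c : ℝ}
    (hgrad : grad h x = grad h x' + c • ones n) : x = x' := by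
  by_contra hne
  have hmono := grad_sub_dotProduct_sub_pos (convex_simplexInt n) hh hpos hx hx' hne
  rw [hgrad, add_sub_cancel_left,
    smul_ones_dotProduct_eq_zero (sum_sub_eq_zero_of_sum_eq_one hx.2 hx'.2)] at hmono
  exact lt_irrefl 0 hmono

theorem isMaxOn_of_grad (hconv : ConvexOn ℝ (simplex n) h) {x : Fin n → ℝ}
    (hx : x ∈ simplexInt n) (hdiff : DifferentiableAt ℝ h x) (c : ℝ) :
    IsMaxOn (fun x' => x' ⬝ᵥ (grad h x + c • ones n) - h x') (simplex n) x := by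
  intro x' hx'
  have hsupport := hconv.le_sub_of_hasFDerivAt (simplexInt_subset_simplex n hx) hx'
    hdiff.hasFDerivAt
  have hlin : x' ⬝ᵥ (grad h x + c • ones n) - x ⬝ᵥ (grad h x + c • ones n)
      = grad h x ⬝ᵥ (x' - x) := by
    rw [← sub_dotProduct, dotProduct_comm, add_dotProduct,
      smul_ones_dotProduct_eq_zero (sum_sub_eq_zero_of_sum_eq_one hx'.2 hx.2), add_zero]
  rw [fderiv_apply_eq_grad_dotProduct] at hsupport
  simp only [Set.mem_ofPred_eq]
  linarith

theorem exists_eq_grad_add_smul_ones_of_isMaxOn {m y : Fin n → ℝ} (hm : m ∈ simplexInt n)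
    (hdiff : DifferentiableAt ℝ h m) (hmax : IsMaxOn (fun x => x ⬝ᵥ y - h x) (simplex n) m) :
    ∃ c : ℝ, y = grad h m + c • ones n := by
  have horth (v : Fin n → ℝ) (hv : ∑ i, v i = 0) : (y - grad h m) ⬝ᵥ v = 0 := by
    have hline : HasDerivAt (fun t : ℝ => m + t • v) v 0 := by
      simpa using ((hasDerivAt_id (0 : ℝ)).smul_const v).const_add m
    have hderiv : HasDerivAt (fun t : ℝ => y ⬝ᵥ (m + t • v) - h (m + t • v))
        (y ⬝ᵥ v - fderiv ℝ h m v) 0 := by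
      refine (hline.const_dotProduct y).sub (HasFDerivAt.comp_hasDerivAt (0 : ℝ) ?_ hline)
      simpa using hdiff.hasFDerivAt
    have hlocal : IsLocalMax (fun t : ℝ => y ⬝ᵥ (m + t • v) - h (m + t • v)) 0 := by
      filter_upwards [eventually_add_smul_mem_simplex hm hv] with t ht
      simpa [dotProduct_comm y] using hmax ht
    rw [sub_dotProduct, ← fderiv_apply_eq_grad_dotProduct]
    exact hlocal.hasDerivAt_eq_zero hderiv
  have hn := ne_zero_of_mem_simplexInt hm
  set w := y - grad h m
  set c : ℝ := (n : ℝ)⁻¹ * ∑ i, w i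
  have hw : w - c • ones n = 0 := by
    have hsum : ∑ i, (w - c • ones n) i = 0 := by
      simp [c, ones, Finset.sum_sub_distrib, hn]
    apply dotProduct_self_eq_zero.1
    rw [sub_dotProduct, horth _ hsum, smul_ones_dotProduct_eq_zero hsum, sub_zero]
  exact ⟨c, by rw [← sub_eq_zero.1 hw, add_sub_cancel]⟩

theorem eq_of_isMaxOn (hconv : ConvexOn ℝ (simplex n) h)
    (hh : ∀ x ∈ simplexInt n, ContDiffAt ℝ 2 h x)
    (hpos : ∀ x ∈ simplexInt n, ∀ v : Fin n → ℝ, v ≠ 0 → 0 < v ⬝ᵥ (hess h x *ᵥ v))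
    {x x' : Fin n → ℝ} (hx : x ∈ simplexInt n) (c : ℝ) (hx' : x' ∈ simplex n)
    (hmax : IsMaxOn (fun x'' => x'' ⬝ᵥ (grad h x + c • ones n) - h x'') (simplex n) x') :
    x' = x := by
  set y := grad h x + c • ones n
  have hdiff (z : Fin n → ℝ) (hz : z ∈ simplexInt n) : DifferentiableAt ℝ h z :=
    (hh z hz).differentiableAt two_ne_zero
  have hmax₀ := isMaxOn_of_grad hconv hx (hdiff x hx) c
  set m : Fin n → ℝ := (2⁻¹ : ℝ) • x + (2⁻¹ : ℝ) • x'
  have hm : m ∈ simplexInt n := by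
    refine ⟨fun i => ?_, ?_⟩
    · have := hx.1 i
      have := hx'.1 i
      simp only [m, Pi.add_apply, Pi.smul_apply, smul_eq_mul]
      positivity
    · simp only [m, Pi.add_apply, Pi.smul_apply, smul_eq_mul, Finset.sum_add_distrib,
        ← Finset.mul_sum, hx.2, hx'.2]
      norm_num
  have hmaxm : IsMaxOn (fun x'' => x'' ⬝ᵥ y - h x'') (simplex n) m := by
    intro z hz
    have hhm := hconv.2 (simplexInt_subset_simplex n hx) hx' (by norm_num : (0 : ℝ) ≤ 2⁻¹)
      (by norm_num : (0 : ℝ) ≤ 2⁻¹) (by norm_num)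
    have h₁ := hmax₀ hz
    have h₂ := hmax (simplexInt_subset_simplex n hx)
    simp only [Set.mem_ofPred_eq, smul_eq_mul] at h₁ h₂ hhm ⊢
    simp only [m, add_dotProduct, smul_dotProduct, smul_eq_mul]
    linarith
  obtain ⟨c', hc'⟩ := exists_eq_grad_add_smul_ones_of_isMaxOn hm (hdiff m hm) hmaxm
  have hmx : m = x := eq_of_grad_eq_add_smul_ones hh hpos hm hx (c := c - c') <| by
    rw [sub_smul, ← add_sub_assoc, eq_sub_iff_add_eq]
    exact hc'.symm
  ext i
  have := congrFun hmx i
  simp only [m, Pi.add_apply, Pi.smul_apply, smul_eq_mul] at this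
  linarith

end Maximizer

section Reparametrization

variable {n : ℕ} {h : (Fin n → ℝ) → ℝ}

def projH (n : ℕ) : (Fin n → ℝ) →L[ℝ] (Fin n → ℝ) :=
  LinearMap.toContinuousLinearMap (Matrix.toLin' (PH n))

theorem projH_apply (z : Fin n → ℝ) : projH n z = z - ((n : ℝ)⁻¹ * ∑ i, z i) • ones n := by
  ext i
  simp [projH, PH, mulVec, dotProduct, ones, Finset.mul_sum]

theorem sum_projH (hn : n ≠ 0) (z : Fin n → ℝ) : ∑ i, projH n z i = 0 := by
  simp [projH_apply, ones, Finset.sum_sub_distrib, hn]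

theorem sub_projH_eq_smul_ones (z : Fin n → ℝ) :
    ∃ c : ℝ, z - projH n z = c • ones n :=
  ⟨_, by rw [projH_apply, sub_sub_cancel]⟩

def projPlane (n : ℕ) (z : Fin n → ℝ) : Fin n → ℝ := projH n z + (n : ℝ)⁻¹ • ones n

theorem hasFDerivAt_projPlane (z : Fin n → ℝ) : HasFDerivAt (projPlane n) (projH n) z :=
  (projH n).hasFDerivAt.add_const _

theorem contDiff_projPlane {k : WithTop ℕ∞} : ContDiff ℝ k (projPlane n) :=
  (projH n).contDiff.add contDiff_const

theorem sum_projPlane (hn : n ≠ 0) (z : Fin n → ℝ) : ∑ i, projPlane n z i = 1 := by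
  simp [projPlane, Finset.sum_add_distrib, sum_projH hn, ones, hn]

theorem projPlane_add_smul_ones (hn : n ≠ 0) {x : Fin n → ℝ} (hx : ∑ i, x i = 1) (c : ℝ) :
    projPlane n (x + c • ones n) = x := by
  ext i
  have hn' : (n : ℝ) ≠ 0 := Nat.cast_ne_zero.2 hn
  simp [projPlane, projH_apply, ones, Finset.sum_add_distrib, hx]
  field_simp
  ring

theorem sub_projPlane_eq_smul_ones (z : Fin n → ℝ) :
    ∃ c : ℝ, z - projPlane n z = c • ones n := by
  obtain ⟨c, hc⟩ := sub_projH_eq_smul_ones z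
  exact ⟨c - (n : ℝ)⁻¹, by rw [projPlane, ← sub_sub, hc, sub_smul]⟩

theorem isOpen_preimage_projPlane_simplexInt (hn : n ≠ 0) :
    IsOpen (projPlane n ⁻¹' simplexInt n) := by
  have : projPlane n ⁻¹' simplexInt n = ⋂ i, {z | 0 < projPlane n z i} := by
    ext z
    simp [simplexInt, sum_projPlane hn]
  rw [this]
  exact isOpen_iInter_of_finite fun i =>
    isOpen_lt continuous_const ((continuous_apply i).comp (contDiff_projPlane (k := 0)).continuous)

def gradExt (h : (Fin n → ℝ) → ℝ) (z : Fin n → ℝ) : Fin n → ℝ :=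
  grad h (projPlane n z) + (z - projPlane n z)

theorem gradExt_add_smul_ones (hn : n ≠ 0) {x : Fin n → ℝ} (hx : ∑ i, x i = 1) (c : ℝ) :
    gradExt h (x + c • ones n) = grad h x + c • ones n := by
  rw [gradExt, projPlane_add_smul_ones hn hx, add_sub_cancel_left]

theorem image_gradExt (hn : n ≠ 0) (h : (Fin n → ℝ) → ℝ) :
    gradExt h '' (projPlane n ⁻¹' simplexInt n)
      = {y | ∃ x ∈ simplexInt n, ∃ c : ℝ, y = grad h x + c • ones n} := by
  ext y
  constructor
  · rintro ⟨z, hz, rfl⟩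
    obtain ⟨c, hc⟩ := sub_projPlane_eq_smul_ones z
    exact ⟨projPlane n z, hz, c, by rw [gradExt, hc]⟩
  · rintro ⟨x, hx, c, rfl⟩
    refine ⟨x + c • ones n, ?_, gradExt_add_smul_ones hn hx.2 c⟩
    rwa [Set.mem_preimage, projPlane_add_smul_ones hn hx.2]

theorem injOn_gradExt (hh : ∀ x ∈ simplexInt n, ContDiffAt ℝ 2 h x)
    (hpos : ∀ x ∈ simplexInt n, ∀ v : Fin n → ℝ, v ≠ 0 → 0 < v ⬝ᵥ (hess h x *ᵥ v)) :
    Set.InjOn (gradExt h) (projPlane n ⁻¹' simplexInt n) := by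
  intro z hz z' hz' heq
  obtain ⟨c, hc⟩ := sub_projPlane_eq_smul_ones z
  obtain ⟨c', hc'⟩ := sub_projPlane_eq_smul_ones z'
  rw [gradExt, gradExt, hc, hc'] at heq
  have hproj : projPlane n z = projPlane n z' :=
    eq_of_grad_eq_add_smul_ones hh hpos hz hz' (c := c' - c) <| by
      rw [sub_smul, ← add_sub_assoc, eq_sub_iff_add_eq, heq]
  rw [hproj] at heq
  rw [sub_eq_iff_eq_add'.1 hc, sub_eq_iff_eq_add'.1 hc', hproj, add_left_cancel heq]

def gradExtDeriv (h : (Fin n → ℝ) → ℝ) (z : Fin n → ℝ) : (Fin n → ℝ) →L[ℝ] (Fin n → ℝ) :=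
  (hessCLM h (projPlane n z)).comp (projH n) + (ContinuousLinearMap.id ℝ _ - projH n)

theorem hasFDerivAt_gradExt {z : Fin n → ℝ} (hh : ContDiffAt ℝ 2 h (projPlane n z)) :
    HasFDerivAt (gradExt h) (gradExtDeriv h z) z :=
  ((hasFDerivAt_grad hh).comp z (hasFDerivAt_projPlane z)).add
    ((hasFDerivAt_id z).sub (hasFDerivAt_projPlane z))

theorem ContDiffAt.gradExt {k m : WithTop ℕ∞} {z : Fin n → ℝ}
    (hh : ContDiffAt ℝ k h (projPlane n z)) (hmk : m + 1 ≤ k) :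
    ContDiffAt ℝ m (gradExt h) z :=
  ((hh.grad hmk).comp z contDiff_projPlane.contDiffAt).add
    (contDiffAt_id.sub contDiff_projPlane.contDiffAt)

theorem injective_gradExtDeriv (hn : n ≠ 0) {z : Fin n → ℝ}
    (hpos : ∀ v : Fin n → ℝ, v ≠ 0 → 0 < v ⬝ᵥ (hess h (projPlane n z) *ᵥ v)) :
    Function.Injective (gradExtDeriv h z) := by
  refine (injective_iff_map_eq_zero _).2 fun v hv => ?_
  obtain ⟨c, hc⟩ := sub_projH_eq_smul_ones v
  have hv' : projH n v ᵥ* hess h (projPlane n z) + c • ones n = 0 := by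
    rw [← hc]
    exact hv
  have hu : projH n v = 0 := by
    by_contra hu
    have hquad := congrArg (· ⬝ᵥ projH n v) hv'
    simp only [add_dotProduct, smul_ones_dotProduct_eq_zero (sum_projH hn v), add_zero,
      zero_dotProduct, ← dotProduct_mulVec] at hquad
    exact (hpos _ hu).ne' hquad
  rw [hu, zero_vecMul, zero_add] at hv'
  rw [← sub_add_cancel v (projH n v), hc, hv', hu, add_zero]

theorem exists_equiv_hasFDerivAt_gradExt (hn : n ≠ 0) {z : Fin n → ℝ}
    (hh : ContDiffAt ℝ 2 h (projPlane n z))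
    (hpos : ∀ v : Fin n → ℝ, v ≠ 0 → 0 < v ⬝ᵥ (hess h (projPlane n z) *ᵥ v)) :
    ∃ e : (Fin n → ℝ) ≃L[ℝ] (Fin n → ℝ), HasFDerivAt (gradExt h) (e : _ →L[ℝ] _) z :=
  ⟨(LinearEquiv.ofInjectiveEndo _ (injective_gradExtDeriv hn hpos)).toContinuousLinearEquiv,
    hasFDerivAt_gradExt hh⟩

end Reparametrization

theorem stmt5_general {n : ℕ} (hn : 2 ≤ n) (h : (Fin n → ℝ) → ℝ)
    (hconv : ConvexOn ℝ (simplex n) h)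
    (U : Set (Fin n → ℝ)) (hU : IsOpen U) (hUsub : simplexInt n ⊆ U)
    (hsmooth : ContDiffOn ℝ (⊤ : ℕ∞) h U)
    (hpos : ∀ x ∈ simplexInt n, ∀ v : Fin n → ℝ, v ≠ 0 → 0 < v ⬝ᵥ (hess h x *ᵥ v)) :
    IsOpen {y : Fin n → ℝ | ∃ x ∈ simplexInt n, ∃ c : ℝ, y = grad h x + c • ones n} ∧
    ∃ q : (Fin n → ℝ) → (Fin n → ℝ),
      ContDiffOn ℝ (⊤ : ℕ∞) q
        {y : Fin n → ℝ | ∃ x ∈ simplexInt n, ∃ c : ℝ, y = grad h x + c • ones n} ∧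
      ∀ y ∈ {y : Fin n → ℝ | ∃ x ∈ simplexInt n, ∃ c : ℝ, y = grad h x + c • ones n},
        q y ∈ simplexInt n ∧
        (∀ x ∈ simplex n, x ⬝ᵥ y - h x ≤ (q y) ⬝ᵥ y - h (q y)) ∧
        (∀ x ∈ simplex n, (∀ x' ∈ simplex n, x' ⬝ᵥ y - h x' ≤ x ⬝ᵥ y - h x) → x = q y) := by
  have hn₀ : n ≠ 0 := by omega
  have hsmoothAt (x : Fin n → ℝ) (hx : x ∈ simplexInt n) : ContDiffAt ℝ (⊤ : ℕ∞) h x :=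
    hsmooth.contDiffAt (hU.mem_nhds (hUsub hx))
  have hC2 (x : Fin n → ℝ) (hx : x ∈ simplexInt n) : ContDiffAt ℝ 2 h x :=
    (hsmoothAt x hx).of_le (WithTop.coe_le_coe.2 le_top)
  set D := projPlane n ⁻¹' simplexInt n
  have hD : IsOpen D := isOpen_preimage_projPlane_simplexInt hn₀
  have hinj : Set.InjOn (gradExt h) D := injOn_gradExt hC2 hpos
  have hsmoothD (z : Fin n → ℝ) (hz : z ∈ D) : ContDiffAt ℝ (⊤ : ℕ∞) (gradExt h) z :=
    (hsmoothAt _ hz).gradExt (by simp)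
  have hderivD (z : Fin n → ℝ) (hz : z ∈ D) :
      ∃ e : (Fin n → ℝ) ≃L[ℝ] (Fin n → ℝ), HasFDerivAt (gradExt h) (e : _ →L[ℝ] _) z :=
    exists_equiv_hasFDerivAt_gradExt hn₀ (hC2 _ hz) (hpos _ hz)
  rw [← image_gradExt hn₀ h]
  refine ⟨isOpen_image_of_contDiffAt_of_hasFDerivAt_equiv hD hsmoothD hderivD (by simp),
    projPlane n ∘ Function.invFunOn (gradExt h) D,
    contDiff_projPlane.comp_contDiffOn
      (contDiffOn_invFunOn_image hD hinj hsmoothD hderivD (by simp)), ?_⟩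
  rintro _ ⟨z, hz, rfl⟩
  obtain ⟨c, hc⟩ := sub_projPlane_eq_smul_ones z
  rw [Function.comp_apply, hinj.leftInvOn_invFunOn hz, gradExt, hc]
  exact ⟨hz, isMaxOn_of_grad hconv hz ((hC2 _ hz).differentiableAt two_ne_zero) c,
    fun x hx hmax => eq_of_isMaxOn hconv hC2 hpos hz c hx hmax⟩

/-- (Smoothness part of Lemma 2 of the paper.) For `h` continuous and
convex on the simplex, `C^∞` on an open set containing `Δ_n°` with positive definite
Hessian there, the set `W = ∇h(Δ_n°) + span{𝟙}` is open, and there is a `C^∞` map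
`q : W → ℝ^n` such that for every `y ∈ W`, `q y` lies in `Δ_n°` and is the unique
maximizer of `x ↦ ⟨x, y⟩ - h x` over `Δ_n`. -/
theorem stmt5 {n : ℕ} (hn : 2 ≤ n) (h : (Fin n → ℝ) → ℝ)
    (hcont : ContinuousOn h (simplex n)) (hconv : ConvexOn ℝ (simplex n) h)
    (U : Set (Fin n → ℝ)) (hU : IsOpen U) (hUsub : simplexInt n ⊆ U)
    (hsmooth : ContDiffOn ℝ (⊤ : ℕ∞) h U)
    (hpos : ∀ x ∈ simplexInt n, ∀ v : Fin n → ℝ, v ≠ 0 → 0 < v ⬝ᵥ (hess h x *ᵥ v)) :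
    IsOpen {y : Fin n → ℝ | ∃ x ∈ simplexInt n, ∃ c : ℝ, y = grad h x + c • ones n} ∧
    ∃ q : (Fin n → ℝ) → (Fin n → ℝ),
      ContDiffOn ℝ (⊤ : ℕ∞) q
        {y : Fin n → ℝ | ∃ x ∈ simplexInt n, ∃ c : ℝ, y = grad h x + c • ones n} ∧
      ∀ y ∈ {y : Fin n → ℝ | ∃ x ∈ simplexInt n, ∃ c : ℝ, y = grad h x + c • ones n},
        q y ∈ simplexInt n ∧
        (∀ x ∈ simplex n, x ⬝ᵥ y - h x ≤ (q y) ⬝ᵥ y - h (q y)) ∧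
        (∀ x ∈ simplex n, (∀ x' ∈ simplex n, x' ⬝ᵥ y - h x' ≤ x ⬝ᵥ y - h x) → x = q y) :=
  stmt5_general hn h hconv U hU hUsub hsmooth hpos
end
end
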